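/- arXiv:1609.05810 — 3 statements merged into one kernel-verified Lean document; each statement's English description precedes it below -/
import Mathlib

section
/- Let 0 < λ ≤ Λ and let 1 ≤ p ≤ n be an integer. For every n×n real symmetric matrix X, the infimum of P⁻_{λ,Λ|W}(X) over all p-dimensional linear subspaces W of ℝⁿ equals the Pucci minimal operator of order p: inf_{W ∈ G_p} P⁻_{λ,Λ|W}(X) = Σ_{i=1}^p (λ·e_i(X)⁺ − Λ·e_i(X)⁻) = P⁻_{λ,Λ|p}(X), where G_p is the set (Grassmannian) of all p-dimensional linear subspaces of ℝⁿ, and the infimum is attained. -/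
open MeasureTheory Metric Filter
open scoped ENNReal

noncomputable section

/-- Matrix (in the standard basis) of the orthogonal projection of `ℝⁿ` onto a subspace `W`. -/
noncomputable def projMatrix {n : ℕ} (W : Submodule ℝ (EuclideanSpace ℝ (Fin n))) :
    Matrix (Fin n) (Fin n) ℝ :=
  LinearMap.toMatrix (EuclideanSpace.basisFun (Fin n) ℝ).toBasis
    (EuclideanSpace.basisFun (Fin n) ℝ).toBasis
    (W.subtype ∘ₗ (W.orthogonalProjection).toLinearMap)

/-- `X_W = P_W X P_W`, the compression of `X` to the subspace `W`. -/
noncomputable def restrictW {n : ℕ} (W : Submodule ℝ (EuclideanSpace ℝ (Fin n)))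
    (X : Matrix (Fin n) (Fin n) ℝ) : Matrix (Fin n) (Fin n) ℝ :=
  projMatrix W * X * projMatrix W

/-- `Tr(A⁺)`, i.e. the sum of the positive parts of the eigenvalues of a symmetric matrix `A`,
where `A = A⁺ - A⁻` is the unique decomposition with `A⁺, A⁻` positive semidefinite and
`A⁺ A⁻ = 0`. -/
noncomputable def posTrace {n : ℕ} (A : Matrix (Fin n) (Fin n) ℝ) : ℝ :=
  if h : A.IsHermitian then ∑ i, max (h.eigenvalues i) 0 else 0

/-- `Tr(A⁻)`, the sum of the negative parts of the eigenvalues of a symmetric matrix `A`. -/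
noncomputable def negTrace {n : ℕ} (A : Matrix (Fin n) (Fin n) ℝ) : ℝ :=
  if h : A.IsHermitian then ∑ i, max (-h.eigenvalues i) 0 else 0

/-- The restricted Pucci maximal operator `P⁺_{λ,Λ|W}(X) = Λ·Tr(X_W⁺) − λ·Tr(X_W⁻)`. -/
noncomputable def pucciSupW {n : ℕ} (lam Lam : ℝ) (W : Submodule ℝ (EuclideanSpace ℝ (Fin n)))
    (X : Matrix (Fin n) (Fin n) ℝ) : ℝ :=
  Lam * posTrace (restrictW W X) - lam * negTrace (restrictW W X)

/-- The restricted Pucci minimal operator `P⁻_{λ,Λ|W}(X) = λ·Tr(X_W⁺) − Λ·Tr(X_W⁻)`. -/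
noncomputable def pucciInfW {n : ℕ} (lam Lam : ℝ) (W : Submodule ℝ (EuclideanSpace ℝ (Fin n)))
    (X : Matrix (Fin n) (Fin n) ℝ) : ℝ :=
  lam * posTrace (restrictW W X) - Lam * negTrace (restrictW W X)

/-- The eigenvalues of a symmetric matrix arranged in increasing order, `0`-based:
`sortedEig X 0 = e_1(X) ≤ … ≤ sortedEig X (n-1) = e_n(X)`. -/
noncomputable def sortedEig {n : ℕ} (X : Matrix (Fin n) (Fin n) ℝ) : Fin n → ℝ :=
  if h : X.IsHermitian then h.eigenvalues ∘ (Tuple.sort h.eigenvalues) else 0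

/-- The degenerate Pucci maximal operator of order `p`:
`P⁺_{λ,Λ|p}(X) = Σ_{i=n−p+1}^n (Λ·e_i(X)⁺ − λ·e_i(X)⁻)` (sum over the `p` largest
eigenvalues). -/
noncomputable def pucciSupP {n : ℕ} (lam Lam : ℝ) (p : ℕ)
    (X : Matrix (Fin n) (Fin n) ℝ) : ℝ :=
  ∑ i ∈ Finset.univ.filter (fun i : Fin n => n - p ≤ (i : ℕ)),
    (Lam * max (sortedEig X i) 0 - lam * max (-(sortedEig X i)) 0)

/-- The degenerate Pucci minimal operator of order `p`:
`P⁻_{λ,Λ|p}(X) = Σ_{i=1}^p (λ·e_i(X)⁺ − Λ·e_i(X)⁻)` (sum over the `p` smallest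
eigenvalues). -/
noncomputable def pucciInfP {n : ℕ} (lam Lam : ℝ) (p : ℕ)
    (X : Matrix (Fin n) (Fin n) ℝ) : ℝ :=
  ∑ i ∈ Finset.univ.filter (fun i : Fin n => (i : ℕ) < p),
    (lam * max (sortedEig X i) 0 - Lam * max (-(sortedEig X i)) 0)

/-- The Hessian matrix `D²φ(x)` of a real valued function on `ℝⁿ`. -/
noncomputable def hessianMatrix {n : ℕ} (φ : EuclideanSpace ℝ (Fin n) → ℝ)
    (x : EuclideanSpace ℝ (Fin n)) : Matrix (Fin n) (Fin n) ℝ :=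
  fun i j => iteratedFDeriv ℝ 2 φ x ![EuclideanSpace.single i 1, EuclideanSpace.single j 1]

/-- `u` is a viscosity subsolution of `G(u, Du, D²u) = f(x)` in `Ω`. -/
def IsViscositySubsolution {n : ℕ} (Ω : Set (EuclideanSpace ℝ (Fin n)))
    (G : ℝ → EuclideanSpace ℝ (Fin n) → Matrix (Fin n) (Fin n) ℝ → ℝ)
    (u f : EuclideanSpace ℝ (Fin n) → ℝ) : Prop :=
  ∀ x₀ ∈ Ω, ∀ φ : EuclideanSpace ℝ (Fin n) → ℝ, ContDiff ℝ 2 φ →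
    IsLocalMaxOn (fun x => u x - φ x) Ω x₀ →
    f x₀ ≤ G (u x₀) (gradient φ x₀) (hessianMatrix φ x₀)

/-- `v` is a viscosity supersolution of `G(v, Dv, D²v) = f(x)` in `Ω`. -/
def IsViscositySupersolution {n : ℕ} (Ω : Set (EuclideanSpace ℝ (Fin n)))
    (G : ℝ → EuclideanSpace ℝ (Fin n) → Matrix (Fin n) (Fin n) ℝ → ℝ)
    (v f : EuclideanSpace ℝ (Fin n) → ℝ) : Prop :=
  ∀ x₀ ∈ Ω, ∀ φ : EuclideanSpace ℝ (Fin n) → ℝ, ContDiff ℝ 2 φ →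
    IsLocalMinOn (fun x => v x - φ x) Ω x₀ →
    G (v x₀) (gradient φ x₀) (hessianMatrix φ x₀) ≤ f x₀

-- The `α`-Riesz kernel (for sets contained in `B_d`), with value `∞` at the origin:
-- `Φ_α(x) = |x|^{−α}` for `α > 0` and `Φ_0(x) = log(2d/|x|)`.
open Classical in
noncomputable def rieszKernel {n : ℕ} (α d : ℝ) (x : EuclideanSpace ℝ (Fin n)) : ℝ≥0∞ :=
  if x = 0 then ⊤
  else ENNReal.ofReal (if α = 0 then Real.log (2 * d / ‖x‖) else ‖x‖ ^ (-α))

/-- The real valued `α`-Riesz kernel (for sets contained in `B_d`):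
`Φ_α(x) = |x|^{−α}` for `α > 0` and `Φ_0(x) = log(2d/|x|)`. -/
noncomputable def rieszKernelR {n : ℕ} (α d : ℝ) (x : EuclideanSpace ℝ (Fin n)) : ℝ :=
  if α = 0 then Real.log (2 * d / ‖x‖) else ‖x‖ ^ (-α)

/-- A set `E ⊆ ℝⁿ` has zero `α`-Riesz capacity: every Borel probability measure supported
on a compact subset of `E` has infinite `α`-energy. -/
def HasZeroRieszCapacity {n : ℕ} (α : ℝ) (E : Set (EuclideanSpace ℝ (Fin n))) : Prop :=
  ∀ K ⊆ E, IsCompact K → ∀ d > 0, K ⊆ ball (0 : EuclideanSpace ℝ (Fin n)) d →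
    ∀ μ : Measure (EuclideanSpace ℝ (Fin n)), IsProbabilityMeasure μ → μ Kᶜ = 0 →
      ∫⁻ x, ∫⁻ y, rieszKernel α d (x - y) ∂μ ∂μ = ⊤


/-
Write `f t = λ t⁺ - Λ t⁻ = min (λ t) (Λ t)`: a monotone, concave, positively homogeneous function.
Diagonalize `X = V diag(e) Vᵀ` and `P X P = U diag(σ) Uᵀ`, `P` the projection onto `W`. Then
`N = Vᵀ P U` satisfies `σ_i = ∑ₖ N_ki² e_k`, so `f σ_i ≥ ∑ₖ N_ki² f e_k`, and summing over `i`,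
`∑ᵢ f σ_i ≥ ∑ₖ R_kk f e_k` with `R = Vᵀ P V`. As `R` is an orthogonal projection of rank `p`, the
weights `R_kk` lie in `[0, 1]` and add up to `p`, and such a weighted sum of the `f e_k` is at least
the sum of the `p` smallest ones. The span of eigenvectors of the `p` smallest eigenvalues attains
the bound.
-/

open Matrix Finset

section

variable {ι : Type*} [Fintype ι]

lemma Matrix.IsHermitian.apply_self_mem_Icc_of_mul_self_eq {R : Matrix ι ι ℝ} (hR : R.IsHermitian)
    (hRR : R * R = R) (i : ι) : R i i ∈ Set.Icc 0 1 := by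
  have hsq : R i i = ∑ k, R i k ^ 2 := by
    conv_lhs => rw [← hRR, mul_apply]
    refine sum_congr rfl fun k _ => ?_
    rw [← hR.apply i k, star_trivial]
    ring
  have hle : R i i ^ 2 ≤ R i i := hsq ▸ single_le_sum (fun k _ => sq_nonneg (R i k)) (mem_univ i)
  constructor <;> nlinarith [sq_nonneg (R i i)]

variable [DecidableEq ι]

lemma Matrix.IsHermitian.star_eigenvectorUnitary_mul_mul_self {A : Matrix ι ι ℝ}
    (hA : A.IsHermitian) :
    star (hA.eigenvectorUnitary : Matrix ι ι ℝ) * A * hA.eigenvectorUnitary =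
      diagonal hA.eigenvalues := by
  simpa using hA.conjStarAlgAut_star_eigenvectorUnitary

lemma eq_mul_mul_star_of_star_mul_mul_eq {Y D : Matrix ι ι ℝ} (U : unitaryGroup ι ℝ)
    (h : star (U : Matrix ι ι ℝ) * Y * U = D) : Y = U * D * star (U : Matrix ι ι ℝ) := by
  have hUU : (U : Matrix ι ι ℝ) * star (U : Matrix ι ι ℝ) = 1 := Unitary.mul_star_self_of_mem U.2
  rw [← h, ← mul_assoc, ← mul_assoc, hUU, one_mul, mul_assoc, hUU, mul_one]

lemma Finset.sum_le_sum_mul_of_separated {s : Finset ι} {g b : ι → ℝ} {c : ℝ}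
    (hb : ∀ k, b k ∈ Set.Icc 0 1) (hsum : ∑ k, b k = s.card) (hlow : ∀ i ∈ s, g i ≤ c)
    (hhigh : ∀ j ∉ s, c ≤ g j) :
    ∑ i ∈ s, g i ≤ ∑ k, b k * g k := by
  have hnonneg : 0 ≤ ∑ k, (b k - if k ∈ s then 1 else 0) * (g k - c) :=
    sum_nonneg fun k _ => by
      by_cases hk : k ∈ s
      · simpa [hk] using mul_nonneg_of_nonpos_of_nonpos (sub_nonpos.2 (hb k).2)
          (sub_nonpos.2 (hlow k hk))
      · simpa [hk] using mul_nonneg (hb k).1 (sub_nonneg.2 (hhigh k hk))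
  have hexpand : ∑ k, (b k - if k ∈ s then 1 else 0) * (g k - c) =
      ∑ k, b k * g k - ∑ i ∈ s, g i - c * (∑ k, b k - s.card) := by
    simp only [sub_mul, mul_sub, sum_sub_distrib, ite_mul, one_mul, zero_mul,
      Fintype.sum_ite_mem, ← sum_mul, sum_const, nsmul_eq_mul]
    ring
  rw [hexpand, hsum, sub_self, mul_zero, sub_zero, sub_nonneg] at hnonneg
  exact hnonneg

end

section Projection

variable {n : ℕ}

lemma toEuclideanLin_projMatrix (W : Submodule ℝ (EuclideanSpace ℝ (Fin n))) :
    toEuclideanLin (projMatrix W) = W.starProjection.toLinearMap := by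
  rw [toEuclideanLin_eq_toLin_orthonormal, projMatrix, toLin_toMatrix]
  rfl

lemma starProjection_span_image_apply (b : OrthonormalBasis (Fin n) ℝ (EuclideanSpace ℝ (Fin n)))
    (s : Finset (Fin n)) (k : Fin n) :
    (Submodule.span ℝ (s.image b : Set (EuclideanSpace ℝ (Fin n)))).starProjection (b k) =
      if k ∈ s then b k else 0 := by
  split_ifs with hk
  · exact Submodule.starProjection_eq_self_iff.2
      (Submodule.subset_span (by simpa using ⟨k, hk, rfl⟩))
  · refine (Submodule.starProjection_apply_eq_zero_iff _).2 fun u hu => ?_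
    have : u ∈ (ℝ ∙ b k)ᗮ := Submodule.span_le.2 (fun v hv => by
      obtain ⟨j, hj, rfl⟩ := by simpa using hv
      exact Submodule.mem_orthogonal_singleton_iff_inner_right.2
        (b.orthonormal.2 (ne_of_mem_of_not_mem hj hk).symm)) hu
    exact (Submodule.mem_orthogonal_singleton_iff_inner_right.1 this) ▸ real_inner_comm _ _

lemma projMatrix_span_image_mul_toMatrix (b : OrthonormalBasis (Fin n) ℝ (EuclideanSpace ℝ (Fin n)))
    (s : Finset (Fin n)) :
    projMatrix (Submodule.span ℝ (s.image b : Set (EuclideanSpace ℝ (Fin n)))) *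
        (EuclideanSpace.basisFun (Fin n) ℝ).toBasis.toMatrix b.toBasis =
      (EuclideanSpace.basisFun (Fin n) ℝ).toBasis.toMatrix b.toBasis *
        diagonal fun k => if k ∈ s then 1 else 0 := by
  ext i k
  rw [projMatrix, linearMap_toMatrix_mul_basis_toMatrix, LinearMap.toMatrix_apply, mul_diagonal,
    Module.Basis.toMatrix_apply, OrthonormalBasis.coe_toBasis]
  rw [LinearMap.comp_apply, ContinuousLinearMap.coe_coe, Submodule.coe_subtype,
    ← Submodule.starProjection_apply, starProjection_span_image_apply b s k]
  split_ifs <;> simp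

lemma projMatrix_mul_self (W : Submodule ℝ (EuclideanSpace ℝ (Fin n))) :
    projMatrix W * projMatrix W = projMatrix W := by
  rw [projMatrix, ← LinearMap.toMatrix_mul]
  exact congrArg _
    (ContinuousLinearMap.IsIdempotentElem.toLinearMap W.isIdempotentElem_starProjection)

lemma projMatrix_isHermitian (W : Submodule ℝ (EuclideanSpace ℝ (Fin n))) :
    (projMatrix W).IsHermitian := by
  rw [← isSymmetric_toEuclideanLin_iff, toEuclideanLin_projMatrix]
  exact W.starProjection_isSymmetric

lemma trace_projMatrix (W : Submodule ℝ (EuclideanSpace ℝ (Fin n))) :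
    (projMatrix W).trace = Module.finrank ℝ W := by
  rw [projMatrix, ← LinearMap.trace_eq_matrix_trace]
  exact LinearMap.IsProj.trace ⟨fun x => (W.orthogonalProjectionOnto x).2,
    fun _ hx => W.starProjection_eq_self_iff.2 hx⟩

lemma restrictW_isHermitian (W : Submodule ℝ (EuclideanSpace ℝ (Fin n)))
    {X : Matrix (Fin n) (Fin n) ℝ} (hX : X.IsHermitian) : (restrictW W X).IsHermitian := by
  rw [restrictW]
  nth_rewrite 1 [← projMatrix_isHermitian W]
  exact isHermitian_conjTranspose_mul_mul _ hX

lemma finrank_span_image_orthonormalBasis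
    (b : OrthonormalBasis (Fin n) ℝ (EuclideanSpace ℝ (Fin n))) (s : Finset (Fin n)) :
    Module.finrank ℝ (Submodule.span ℝ (s.image b : Set (EuclideanSpace ℝ (Fin n)))) = s.card := by
  classical
  rw [Module.finrank_eq_card_basis (OrthonormalBasis.span b.orthonormal s).toBasis,
    Fintype.card_coe]

end Projection

namespace Pucci

lemma mul_max_sub_mul_max_neg_eq_min {lam Lam : ℝ} (hLam : lam ≤ Lam) (t : ℝ) :
    lam * max t 0 - Lam * max (-t) 0 = min (lam * t) (Lam * t) := by
  rcases le_total 0 t with ht | ht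
  · rw [max_eq_left ht, max_eq_right (by linarith), min_eq_left (by nlinarith)]
    ring
  · rw [max_eq_right ht, max_eq_left (by linarith), min_eq_right (by nlinarith)]
    ring

lemma monotone_min_mul {lam Lam : ℝ} (hlam : 0 ≤ lam) (hLam : lam ≤ Lam) :
    Monotone fun t : ℝ => min (lam * t) (Lam * t) :=
  fun _ _ hst => min_le_min (by nlinarith) (by nlinarith)

section Jensen

variable {ι : Type*} [Fintype ι] [DecidableEq ι]

-- `σ i = ∑ k, N k i ^ 2 * d k`, and `t ↦ min (a * t) (b * t)` is concave and positively
-- homogeneous.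
lemma sum_mul_min_le_of_conj_diagonal (a b : ℝ) {N : Matrix ι ι ℝ} {d σ : ι → ℝ}
    (h : star N * diagonal d * N = diagonal σ) :
    ∑ k, (N * star N) k k * min (a * d k) (b * d k) ≤ ∑ i, min (a * σ i) (b * σ i) := by
  have hσ : ∀ i, σ i = ∑ k, N k i ^ 2 * d k := fun i => by
    rw [← diagonal_apply_eq σ i, ← h, mul_assoc, mul_apply]
    refine sum_congr rfl fun k _ => ?_
    rw [diagonal_mul, star_apply, star_trivial]
    ring
  have hrow : ∀ k, (N * star N) k k = ∑ i, N k i ^ 2 := fun k => by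
    rw [mul_apply]
    refine sum_congr rfl fun i _ => ?_
    rw [star_apply, star_trivial]
    ring
  have hconv : ∀ (c : ℝ) (i : ι) (g : ι → ℝ), (∀ k, g k ≤ c * d k) →
      ∑ k, N k i ^ 2 * g k ≤ c * σ i := fun c i g hg => by
    rw [hσ, mul_sum]
    exact sum_le_sum fun k _ => by nlinarith [hg k, sq_nonneg (N k i)]
  calc ∑ k, (N * star N) k k * min (a * d k) (b * d k)
      = ∑ i, ∑ k, N k i ^ 2 * min (a * d k) (b * d k) := by
        simp_rw [hrow, sum_mul]
        exact sum_comm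
    _ ≤ ∑ i, min (a * σ i) (b * σ i) := sum_le_sum fun i _ =>
        le_min (hconv a i _ fun _ => min_le_left _ _) (hconv b i _ fun _ => min_le_right _ _)

lemma sum_min_le_of_conj_eq_diagonal (a b : ℝ) {Y : Matrix ι ι ℝ} (U Q : unitaryGroup ι ℝ)
    {σ d : ι → ℝ} (hU : star (U : Matrix ι ι ℝ) * Y * U = diagonal σ)
    (hQ : star (Q : Matrix ι ι ℝ) * Y * Q = diagonal d) :
    ∑ i, min (a * σ i) (b * σ i) ≤ ∑ k, min (a * d k) (b * d k) := by
  have hN : star (star (U : Matrix ι ι ℝ) * Q) * diagonal σ * (star (U : Matrix ι ι ℝ) * Q) =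
      diagonal d := by
    rw [← hQ, eq_mul_mul_star_of_star_mul_mul_eq U hU]
    simp only [star_mul, star_star, mul_assoc]
  have hNN : star (U : Matrix ι ι ℝ) * Q * star (star (U : Matrix ι ι ℝ) * Q) = 1 := by
    rw [star_mul, star_star, mul_assoc, ← mul_assoc (Q : Matrix ι ι ℝ),
      Unitary.mul_star_self_of_mem Q.2, one_mul, Unitary.star_mul_self_of_mem U.2]
  simpa only [hNN, one_apply_eq, one_mul] using sum_mul_min_le_of_conj_diagonal a b hN

lemma sum_mul_min_le_of_conj_compression_eq_diagonal (a b : ℝ) {X P : Matrix ι ι ℝ}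
    (V U : unitaryGroup ι ℝ) {e σ : ι → ℝ} (hV : star (V : Matrix ι ι ℝ) * X * V = diagonal e)
    (hU : star (U : Matrix ι ι ℝ) * (star P * X * P) * U = diagonal σ) :
    ∑ k, (star (V : Matrix ι ι ℝ) * (P * star P) * V) k k * min (a * e k) (b * e k) ≤
      ∑ i, min (a * σ i) (b * σ i) := by
  have hN : star (star (V : Matrix ι ι ℝ) * P * U) * diagonal e *
      (star (V : Matrix ι ι ℝ) * P * U) = diagonal σ := by
    rw [← hU, eq_mul_mul_star_of_star_mul_mul_eq V hV]
    simp only [star_mul, star_star, mul_assoc]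
  have hNN : star (V : Matrix ι ι ℝ) * P * U * star (star (V : Matrix ι ι ℝ) * P * U) =
      star (V : Matrix ι ι ℝ) * (P * star P) * V := by
    simp only [star_mul, star_star, mul_assoc]
    rw [← mul_assoc (U : Matrix ι ι ℝ), Unitary.mul_star_self_of_mem U.2, one_mul]
  simpa only [hNN] using sum_mul_min_le_of_conj_diagonal a b hN

end Jensen

variable {n : ℕ} {lam Lam : ℝ}

lemma pucciInfW_eq_sum_min (hLam : lam ≤ Lam) (W : Submodule ℝ (EuclideanSpace ℝ (Fin n)))
    (X : Matrix (Fin n) (Fin n) ℝ) (hY : (restrictW W X).IsHermitian) :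
    pucciInfW lam Lam W X = ∑ i, min (lam * hY.eigenvalues i) (Lam * hY.eigenvalues i) := by
  rw [pucciInfW, posTrace, negTrace, dif_pos hY, dif_pos hY, mul_sum, mul_sum,
    ← sum_sub_distrib]
  exact sum_congr rfl fun i _ => mul_max_sub_mul_max_neg_eq_min hLam _

def lowestEigenIndices {X : Matrix (Fin n) (Fin n) ℝ} (hX : X.IsHermitian) (p : ℕ) :
    Finset (Fin n) :=
  (univ.filter fun i : Fin n => (i : ℕ) < p).map (Tuple.sort hX.eigenvalues).toEmbedding

lemma card_lowestEigenIndices {X : Matrix (Fin n) (Fin n) ℝ} (hX : X.IsHermitian) {p : ℕ}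
    (hpn : p ≤ n) : (lowestEigenIndices hX p).card = p := by
  rw [lowestEigenIndices, card_map, Fin.card_filter_val_lt, min_eq_right hpn]

lemma pucciInfP_eq_sum_lowestEigenIndices (hLam : lam ≤ Lam) (p : ℕ)
    {X : Matrix (Fin n) (Fin n) ℝ} (hX : X.IsHermitian) :
    pucciInfP lam Lam p X =
      ∑ k ∈ lowestEigenIndices hX p, min (lam * hX.eigenvalues k) (Lam * hX.eigenvalues k) := by
  rw [pucciInfP, sortedEig, dif_pos hX, lowestEigenIndices, sum_map]
  exact sum_congr rfl fun i _ => mul_max_sub_mul_max_neg_eq_min hLam _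

lemma exists_separating_lowestEigenIndices {X : Matrix (Fin n) (Fin n) ℝ} (hX : X.IsHermitian)
    {p : ℕ} (hp1 : 1 ≤ p) (hpn : p ≤ n) :
    ∃ c, (∀ k ∈ lowestEigenIndices hX p, hX.eigenvalues k ≤ c) ∧
      ∀ k ∉ lowestEigenIndices hX p, c ≤ hX.eigenvalues k := by
  set τ := Tuple.sort hX.eigenvalues
  have hmono : Monotone (hX.eigenvalues ∘ τ) := Tuple.monotone_sort _
  refine ⟨hX.eigenvalues (τ ⟨p - 1, by omega⟩), fun k hk => ?_, fun k hk => ?_⟩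
  · obtain ⟨j, hj, rfl⟩ := Finset.mem_map.1 hk
    exact hmono (Fin.le_def.2 (by simp at hj ⊢; omega))
  · have hj : p ≤ (τ.symm k : ℕ) := not_lt.1 fun h =>
      hk (Finset.mem_map.2 ⟨τ.symm k, by simpa using h, τ.apply_symm_apply k⟩)
    simpa using hmono (Fin.le_def.2 (by simp; omega) : (⟨p - 1, by omega⟩ : Fin n) ≤ τ.symm k)

lemma pucciInfP_le_pucciInfW (hlam : 0 ≤ lam) (hLam : lam ≤ Lam) {p : ℕ} (hp1 : 1 ≤ p)
    (hpn : p ≤ n) {X : Matrix (Fin n) (Fin n) ℝ} (hX : X.IsHermitian)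
    {W : Submodule ℝ (EuclideanSpace ℝ (Fin n))} (hW : Module.finrank ℝ W = p) :
    pucciInfP lam Lam p X ≤ pucciInfW lam Lam W X := by
  set P := projMatrix W
  have hP : star P = P := projMatrix_isHermitian W
  have hY := restrictW_isHermitian W hX
  set V : Matrix (Fin n) (Fin n) ℝ := ↑hX.eigenvectorUnitary
  set R := star V * P * V
  have hR : R.IsHermitian := isHermitian_conjTranspose_mul_mul V hP
  have hRR : R * R = R := by
    calc R * R = star V * P * (V * star V) * P * V := by simp only [R, mul_assoc]
      _ = R := by rw [Unitary.mul_star_self_of_mem hX.eigenvectorUnitary.2, mul_one,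
            mul_assoc (star V), projMatrix_mul_self]
  have htrace : ∑ k, R k k = (lowestEigenIndices hX p).card := by
    rw [card_lowestEigenIndices hX hpn, ← hW, ← trace_projMatrix]
    calc ∑ k, R k k = (V * star V * P).trace := trace_mul_cycle _ _ _
      _ = P.trace := by rw [Unitary.mul_star_self_of_mem hX.eigenvectorUnitary.2, one_mul]
  obtain ⟨c, hlow, hhigh⟩ := exists_separating_lowestEigenIndices hX hp1 hpn
  have hmono := monotone_min_mul hlam hLam
  have hjensen := sum_mul_min_le_of_conj_compression_eq_diagonal lam Lam hX.eigenvectorUnitary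
    hY.eigenvectorUnitary hX.star_eigenvectorUnitary_mul_mul_self
    (by rw [hP]; exact hY.star_eigenvectorUnitary_mul_mul_self)
  rw [hP, projMatrix_mul_self] at hjensen
  rw [pucciInfP_eq_sum_lowestEigenIndices hLam p hX, pucciInfW_eq_sum_min hLam W X hY]
  exact (sum_le_sum_mul_of_separated (hR.apply_self_mem_Icc_of_mul_self_eq hRR) htrace
    (fun k hk => hmono (hlow k hk)) (fun k hk => hmono (hhigh k hk))).trans hjensen

lemma pucciInfW_span_eigenvectorBasis_le (hLam : lam ≤ Lam) {X : Matrix (Fin n) (Fin n) ℝ}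
    (hX : X.IsHermitian) (s : Finset (Fin n)) :
    pucciInfW lam Lam
        (Submodule.span ℝ (s.image hX.eigenvectorBasis : Set (EuclideanSpace ℝ (Fin n)))) X ≤
      ∑ k ∈ s, min (lam * hX.eigenvalues k) (Lam * hX.eigenvalues k) := by
  set W := Submodule.span ℝ (s.image hX.eigenvectorBasis : Set (EuclideanSpace ℝ (Fin n)))
  set P := projMatrix W
  set V : Matrix (Fin n) (Fin n) ℝ := ↑hX.eigenvectorUnitary
  set D : Matrix (Fin n) (Fin n) ℝ := diagonal fun k => if k ∈ s then 1 else 0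
  have hY := restrictW_isHermitian W hX
  have hPV : P * V = V * D := projMatrix_span_image_mul_toMatrix hX.eigenvectorBasis s
  have hVP : star V * P = D * star V := by
    have hP : star P = P := projMatrix_isHermitian W
    have hD : star D = D := by simp [D, star_eq_conjTranspose]
    simpa only [star_mul, hP, hD] using congrArg star hPV
  have hconj : star V * restrictW W X * V =
      diagonal fun k => if k ∈ s then hX.eigenvalues k else 0 := by
    calc star V * restrictW W X * V = star V * P * X * (P * V) := by
          simp only [restrictW, P, mul_assoc]
      _ = D * (star V * X * V) * D := by rw [hVP, hPV]; simp only [mul_assoc]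
      _ = _ := by
        rw [hX.star_eigenvectorUnitary_mul_mul_self, diagonal_mul_diagonal,
          diagonal_mul_diagonal]
        congr 1
        ext k
        split_ifs <;> simp
  rw [pucciInfW_eq_sum_min hLam W X hY, ← Fintype.sum_ite_mem s]
  refine (sum_min_le_of_conj_eq_diagonal lam Lam hY.eigenvectorUnitary hX.eigenvectorUnitary
    hY.star_eigenvectorUnitary_mul_mul_self hconj).trans_eq (sum_congr rfl fun k _ => ?_)
  split_ifs <;> simp

end Pucci

/-- the Pucci minimal operator of order `p` is the (attained) infimum of the
restricted Pucci minimal operators over the Grassmannian of `p`-dimensional subspaces. -/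
theorem pucci_order_inf_representation (n : ℕ) (lam Lam : ℝ)
    (hlam : 0 < lam) (hLam : lam ≤ Lam) (p : ℕ) (hp1 : 1 ≤ p) (hpn : p ≤ n)
    (X : Matrix (Fin n) (Fin n) ℝ) (hX : X.IsHermitian) :
    IsLeast {r : ℝ | ∃ W : Submodule ℝ (EuclideanSpace ℝ (Fin n)),
        Module.finrank ℝ W = p ∧ r = pucciInfW lam Lam W X}
      (pucciInfP lam Lam p X) ∧
    pucciInfP lam Lam p X =
      ∑ i ∈ Finset.univ.filter (fun i : Fin n => (i : ℕ) < p),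
        (lam * max (sortedEig X i) 0 - Lam * max (-(sortedEig X i)) 0) := by
  set s := Pucci.lowestEigenIndices hX p
  set W₀ := Submodule.span ℝ (s.image hX.eigenvectorBasis : Set (EuclideanSpace ℝ (Fin n)))
  have hW₀ : Module.finrank ℝ W₀ = p := by
    rw [finrank_span_image_orthonormalBasis, Pucci.card_lowestEigenIndices hX hpn]
  have hlower : ∀ W : Submodule ℝ (EuclideanSpace ℝ (Fin n)), Module.finrank ℝ W = p →
      pucciInfP lam Lam p X ≤ pucciInfW lam Lam W X :=
    fun _ hW => Pucci.pucciInfP_le_pucciInfW hlam.le hLam hp1 hpn hX hW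
  have hupper := Pucci.pucciInfW_span_eigenvectorBasis_le hLam hX s
  rw [← Pucci.pucciInfP_eq_sum_lowestEigenIndices hLam p hX] at hupper
  refine ⟨⟨⟨W₀, hW₀, le_antisymm (hlower _ hW₀) hupper⟩, ?_⟩, rfl⟩
  rintro r ⟨W, hW, rfl⟩
  exact hlower W hW

end
end

section
/- Let 0 < λ ≤ Λ and let 1 ≤ p ≤ n be an integer. For every n×n real symmetric matrix X the following chain of inequalities holds: P⁻_{(n/p)λ,(n/p)Λ|p}(X) ≤ M⁻_{λ,Λ}(X) ≤ M⁺_{λ,Λ}(X) ≤ P⁺_{(n/p)λ,(n/p)Λ|p}(X), where M⁺_{λ,Λ}(X) = Σ_{i=1}^n (Λ·e_i(X)⁺ − λ·e_i(X)⁻) and M⁻_{λ,Λ}(X) = Σ_{i=1}^n (λ·e_i(X)⁺ − Λ·e_i(X)⁻) are the standard Pucci extremal operators. -/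
open MeasureTheory Metric Filter
open scoped ENNReal

noncomputable section

/-! Along the increasingly ordered eigenvalues, `e ↦ e⁺` is monotone and `e ↦ e⁻` antitone. The mean
of a monotone sequence over its first `p` terms is at most its mean over all `n` terms, which is at
most its mean over its last `p` terms; weighting the positive and negative parts by `λ, Λ ≥ 0` gives
the outer inequalities, and the middle one holds termwise since `λ ≤ Λ`. -/

open Finset

section Averages

variable {ι M : Type*} [AddCommMonoid M] [PartialOrder M] [IsOrderedAddMonoid M] {g : ι → M}

theorem Finset.card_nsmul_sum_le_card_nsmul_sum {s t : Finset ι}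
    (h : ∀ i ∈ s, ∀ j ∈ t, g i ≤ g j) :
    #t • ∑ i ∈ s, g i ≤ #s • ∑ j ∈ t, g j :=
  calc #t • ∑ i ∈ s, g i = ∑ i ∈ s, ∑ _j ∈ t, g i := by simp only [sum_const, smul_sum]
    _ ≤ ∑ _i ∈ s, ∑ j ∈ t, g j := sum_le_sum fun i hi => sum_le_sum fun j hj => h i hi j hj
    _ = #s • ∑ j ∈ t, g j := sum_const _

variable [Fintype ι] (q : ι → Prop) [DecidablePred q]

theorem Finset.card_nsmul_sum_filter_le_card_filter_nsmul_sum
    (h : ∀ i j, q i → ¬ q j → g i ≤ g j) :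
    Fintype.card ι • ∑ i ∈ univ.filter q, g i ≤ #(univ.filter q) • ∑ i, g i := by
  rw [← card_univ, ← card_filter_add_card_filter_not q, add_nsmul,
    ← sum_filter_add_sum_filter_not univ q g, nsmul_add]
  exact add_le_add_right (card_nsmul_sum_le_card_nsmul_sum fun i hi j hj =>
    h i j (mem_filter.1 hi).2 (mem_filter.1 hj).2) _

theorem Finset.card_filter_nsmul_sum_le_card_nsmul_sum_filter
    (h : ∀ i j, q i → ¬ q j → g j ≤ g i) :
    #(univ.filter q) • ∑ i, g i ≤ Fintype.card ι • ∑ i ∈ univ.filter q, g i :=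
  card_nsmul_sum_filter_le_card_filter_nsmul_sum (M := Mᵒᵈ) q h

end Averages

theorem Fin.card_filter_sub_le_val {n p : ℕ} (hpn : p ≤ n) :
    #(univ.filter fun i : Fin n => n - p ≤ (i : ℕ)) = p := by
  have h := card_filter_add_card_filter_not (s := univ) fun i : Fin n => (i : ℕ) < n - p
  simp only [not_lt] at h
  rw [Fin.card_filter_val_lt, card_univ, Fintype.card_fin] at h
  omega

section SortedAverages

variable {n p : ℕ} {g : Fin n → ℝ}

theorem Monotone.div_mul_sum_filter_lt_le_sum (hg : Monotone g) (hp : 0 < p) (hpn : p ≤ n) :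
    (n : ℝ) / p * ∑ i ∈ univ.filter (fun i : Fin n => (i : ℕ) < p), g i ≤ ∑ i, g i := by
  have h := card_nsmul_sum_filter_le_card_filter_nsmul_sum (g := g) (fun i : Fin n => (i : ℕ) < p)
    fun i j hi hj => hg (Fin.le_def.2 (by omega))
  rw [Fintype.card_fin, Fin.card_filter_val_lt, min_eq_right hpn, nsmul_eq_mul, nsmul_eq_mul] at h
  rw [div_mul_eq_mul_div, div_le_iff₀ (by positivity)]
  linarith

theorem Antitone.sum_le_div_mul_sum_filter_lt (hg : Antitone g) (hp : 0 < p) (hpn : p ≤ n) :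
    ∑ i, g i ≤ (n : ℝ) / p * ∑ i ∈ univ.filter (fun i : Fin n => (i : ℕ) < p), g i := by
  have h := card_filter_nsmul_sum_le_card_nsmul_sum_filter (g := g) (fun i : Fin n => (i : ℕ) < p)
    fun i j hi hj => hg (Fin.le_def.2 (by omega))
  rw [Fintype.card_fin, Fin.card_filter_val_lt, min_eq_right hpn, nsmul_eq_mul, nsmul_eq_mul] at h
  rw [div_mul_eq_mul_div, le_div_iff₀ (by positivity)]
  linarith

theorem Monotone.sum_le_div_mul_sum_filter_sub_le (hg : Monotone g) (hp : 0 < p) (hpn : p ≤ n) :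
    ∑ i, g i ≤ (n : ℝ) / p * ∑ i ∈ univ.filter (fun i : Fin n => n - p ≤ (i : ℕ)), g i := by
  have h := card_filter_nsmul_sum_le_card_nsmul_sum_filter (g := g)
    (fun i : Fin n => n - p ≤ (i : ℕ)) fun i j hi hj => hg (Fin.le_def.2 (by omega))
  rw [Fintype.card_fin, Fin.card_filter_sub_le_val hpn, nsmul_eq_mul, nsmul_eq_mul] at h
  rw [div_mul_eq_mul_div, le_div_iff₀ (by positivity)]
  linarith

theorem Antitone.div_mul_sum_filter_sub_le_le_sum (hg : Antitone g) (hp : 0 < p) (hpn : p ≤ n) :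
    (n : ℝ) / p * ∑ i ∈ univ.filter (fun i : Fin n => n - p ≤ (i : ℕ)), g i ≤ ∑ i, g i := by
  have h := card_nsmul_sum_filter_le_card_filter_nsmul_sum (g := g)
    (fun i : Fin n => n - p ≤ (i : ℕ)) fun i j hi hj => hg (Fin.le_def.2 (by omega))
  rw [Fintype.card_fin, Fin.card_filter_sub_le_val hpn, nsmul_eq_mul, nsmul_eq_mul] at h
  rw [div_mul_eq_mul_div, div_le_iff₀ (by positivity)]
  linarith

end SortedAverages

theorem sortedEig_monotone {n : ℕ} (X : Matrix (Fin n) (Fin n) ℝ) : Monotone (sortedEig X) := by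
  unfold sortedEig
  split_ifs with hX
  · exact Tuple.monotone_sort hX.eigenvalues
  · exact monotone_const

theorem pucci_inclusions_general (n : ℕ) (lam Lam : ℝ) (hlam : 0 < lam) (hLam : lam ≤ Lam)
    (p : ℕ) (hp1 : 1 ≤ p) (hpn : p ≤ n) (X : Matrix (Fin n) (Fin n) ℝ) :
    pucciInfP ((n : ℝ) / (p : ℝ) * lam) ((n : ℝ) / (p : ℝ) * Lam) p X ≤
        ∑ i : Fin n, (lam * max (sortedEig X i) 0 - Lam * max (-(sortedEig X i)) 0) ∧
    (∑ i : Fin n, (lam * max (sortedEig X i) 0 - Lam * max (-(sortedEig X i)) 0)) ≤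
        ∑ i : Fin n, (Lam * max (sortedEig X i) 0 - lam * max (-(sortedEig X i)) 0) ∧
    (∑ i : Fin n, (Lam * max (sortedEig X i) 0 - lam * max (-(sortedEig X i)) 0)) ≤
        pucciSupP ((n : ℝ) / (p : ℝ) * lam) ((n : ℝ) / (p : ℝ) * Lam) p X := by
  have hLam' : 0 ≤ Lam := hlam.le.trans hLam
  have hPos : Monotone fun i => max (sortedEig X i) 0 := (sortedEig_monotone X).max monotone_const
  have hNeg : Antitone fun i => max (-sortedEig X i) 0 :=
    (sortedEig_monotone X).neg.max antitone_const
  simp only [pucciInfP, pucciSupP, sum_sub_distrib, ← mul_sum]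
  refine ⟨?_, ?_, ?_⟩
  · have := mul_le_mul_of_nonneg_left (hPos.div_mul_sum_filter_lt_le_sum hp1 hpn) hlam.le
    have := mul_le_mul_of_nonneg_left (hNeg.sum_le_div_mul_sum_filter_lt hp1 hpn) hLam'
    linarith
  · gcongr
  · have := mul_le_mul_of_nonneg_left (hPos.sum_le_div_mul_sum_filter_sub_le hp1 hpn) hLam'
    have := mul_le_mul_of_nonneg_left (hNeg.div_mul_sum_filter_sub_le_le_sum hp1 hpn) hlam.le
    linarith

/-- the standard Pucci extremal operators are included between the degenerate
Pucci operators of order `p` with ellipticity constants `(n/p)λ, (n/p)Λ`. -/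
theorem pucci_inclusions (n : ℕ) (lam Lam : ℝ) (hlam : 0 < lam) (hLam : lam ≤ Lam)
    (p : ℕ) (hp1 : 1 ≤ p) (hpn : p ≤ n) (X : Matrix (Fin n) (Fin n) ℝ) (hX : X.IsHermitian) :
    pucciInfP ((n : ℝ) / (p : ℝ) * lam) ((n : ℝ) / (p : ℝ) * Lam) p X ≤
        ∑ i : Fin n, (lam * max (sortedEig X i) 0 - Lam * max (-(sortedEig X i)) 0) ∧
    (∑ i : Fin n, (lam * max (sortedEig X i) 0 - Lam * max (-(sortedEig X i)) 0)) ≤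
        ∑ i : Fin n, (Lam * max (sortedEig X i) 0 - lam * max (-(sortedEig X i)) 0) ∧
    (∑ i : Fin n, (Lam * max (sortedEig X i) 0 - lam * max (-(sortedEig X i)) 0)) ≤
        pucciSupP ((n : ℝ) / (p : ℝ) * lam) ((n : ℝ) / (p : ℝ) * Lam) p X :=
  pucci_inclusions_general n lam Lam hlam hLam p hp1 hpn X

end
end

section
/- Let 0 < λ ≤ Λ, let 2 ≤ p ≤ n be an integer, and set α* = (λ/Λ)(p−1) − 1. If α* > 0, then the function Φ(x) = |x|^{−α*} is twice differentiable on ℝⁿ∖{0} and satisfies P⁺_{λ,Λ|p}(D²Φ(x)) = 0 for every x ≠ 0. If α* = 0, then for every R > 0 the function Φ(x) = log(R/|x|) is twice differentiable on the punctured ball {0 < |x| < R}, is positive there, and satisfies P⁺_{λ,Λ|p}(D²Φ(x)) = 0 for every x with 0 < |x| < R. (These are the fundamental solutions of the degenerate Pucci maximal equation.) -/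
open MeasureTheory Metric Filter
open scoped ENNReal

noncomputable section

/-!
Both kernels are radial, `Φ(x) = f(|x|²)`, so `D²Φ(x) = 4 f''(|x|²) x xᵀ + 2 f'(|x|²) I`. The
characteristic polynomial of this rank-one perturbation of a scalar matrix shows that its
eigenvalues are `2f'` (tangential, multiplicity `n - 1`) and `2f' + 4f''|x|²` (radial), the latter
being the largest because `f'' ≥ 0`. For both kernels the tangential eigenvalue is `≤ 0` and the
radial one `≥ 0`, so `P⁺_{λ,Λ|p}(D²Φ) = Λ·radial + (p - 1)λ·tangential`. This equals
`α (Λ(α + 1) - λ(p - 1)) |x|^{-α-2}` for `|x|^{-α}` and `(Λ - λ(p - 1)) / |x|²` for `log(R/|x|)`,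
and both vanish at `α = α*`.
-/

open Polynomial Matrix Finset Topology

lemma charpoly_smul_vecMulVec_add_smul_one {R ι : Type*} [CommRing R] [Fintype ι] [DecidableEq ι]
    [Nonempty ι] (v : ι → R) (c d : R) :
    (c • vecMulVec v v + d • 1).charpoly =
      (X - C d) ^ (Fintype.card ι - 1) * (X - C (d + c * (v ⬝ᵥ v))) := by
  have hM : c • vecMulVec v v + d • (1 : Matrix ι ι R) = vecMulVec (c • v) v - scalar ι (-d) := by
    rw [← smul_vecMulVec, scalar_apply, sub_eq_add_neg, ← smul_one_eq_diagonal]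
    simp
  rw [hM, charpoly_sub_scalar, charpoly_vecMulVec]
  obtain ⟨k, hk⟩ : ∃ k, Fintype.card ι = k + 1 := Nat.exists_eq_succ_of_ne_zero Fintype.card_ne_zero
  simp only [hk, add_tsub_cancel_right, pow_succ, sub_comp, mul_comp, pow_comp, X_comp, C_comp,
    smul_eq_C_mul, smul_dotProduct, smul_eq_mul, map_add, map_mul, map_neg]
  ring

lemma sortedEig_eq_of_charpoly_eq {n : ℕ} {M : Matrix (Fin n) (Fin n) ℝ} (hM : M.IsHermitian)
    {t : Fin n → ℝ} (ht : Monotone t) (h : M.charpoly = ∏ i, (X - C (t i))) :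
    sortedEig M = t := by
  have hroots : univ.val.map hM.eigenvalues = univ.val.map t := by
    have := roots_multiset_prod_X_sub_C (univ.val.map t)
    rw [Multiset.map_map, ← Finset.prod_eq_multiset_prod, Function.comp_def, ← h,
      hM.roots_charpoly_eq_eigenvalues] at this
    simpa using this
  rw [sortedEig, dif_pos hM]
  apply List.ofFn_injective
  refine List.Perm.eq_of_sortedLE (Tuple.monotone_sort _).sortedLE_ofFn ht.sortedLE_ofFn ?_
  rw [← Multiset.coe_eq_coe, ← Fin.univ_val_map, ← Fin.univ_val_map, ← hroots, ← Multiset.map_map,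
    Multiset.map_univ_val_equiv]

lemma sortedEig_smul_vecMulVec_add_smul_one {m : ℕ} (v : Fin (m + 1) → ℝ) {c : ℝ} (hc : 0 ≤ c)
    (d : ℝ) :
    sortedEig (c • vecMulVec v v + d • 1) =
      fun i => if i = Fin.last m then d + c * (v ⬝ᵥ v) else d := by
  have hM : (c • vecMulVec v v + d • 1 : Matrix (Fin (m + 1)) (Fin (m + 1)) ℝ).IsHermitian := by
    ext i j
    simp [vecMulVec_apply, one_apply, eq_comm, mul_comm]
  refine sortedEig_eq_of_charpoly_eq hM ?_ ?_
  · have : 0 ≤ c * (v ⬝ᵥ v) := mul_nonneg hc (by simpa using dotProduct_self_star_nonneg v)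
    intro i j hij
    by_cases hj : j = Fin.last m
    · by_cases hi : i = Fin.last m <;> simp [hi, hj, this]
    · have hi : i ≠ Fin.last m := fun hi => hj (Fin.last_le_iff.mp (hi ▸ hij))
      simp [hi, hj]
  · rw [charpoly_smul_vecMulVec_add_smul_one, Fin.prod_univ_castSucc]
    simp [Fin.castSucc_ne_last]

lemma pucciSupP_of_sortedEig_eq {m p : ℕ} (hp : 1 ≤ p) (hpm : p ≤ m + 1) (lam Lam d T : ℝ)
    {M : Matrix (Fin (m + 1)) (Fin (m + 1)) ℝ}
    (hM : sortedEig M = fun i => if i = Fin.last m then T else d) :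
    pucciSupP lam Lam p M = (Lam * max T 0 - lam * max (-T) 0) +
      ((p : ℝ) - 1) * (Lam * max d 0 - lam * max (-d) 0) := by
  set S := univ.filter fun i : Fin (m + 1) => m + 1 - p ≤ (i : ℕ)
  have hlast : Fin.last m ∈ S := by
    simp only [S, mem_filter, mem_univ, Fin.val_last, true_and]
    omega
  have hS : S.card = p := by
    have h := card_filter_add_card_filter_not (s := univ)
      fun i : Fin (m + 1) => (i : ℕ) < m + 1 - p
    simp only [not_lt, card_univ, Fintype.card_fin, Fin.card_filter_val_lt] at h
    simp only [S]
    omega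
  rw [pucciSupP, ← add_sum_erase S _ hlast]
  simp only [hM, if_true]
  rw [sum_congr rfl fun i hi => by rw [if_neg (ne_of_mem_erase hi)], sum_const,
    card_erase_of_mem hlast, hS, nsmul_eq_mul, Nat.cast_sub hp, Nat.cast_one]

lemma pucciSupP_smul_vecMulVec_add_smul_one {n p : ℕ} (hp : 1 ≤ p) (hpn : p ≤ n) (lam Lam : ℝ)
    (v : Fin n → ℝ) {c d : ℝ} (hc : 0 ≤ c) (hd : d ≤ 0) (hT : 0 ≤ d + c * (v ⬝ᵥ v)) :
    pucciSupP lam Lam p (c • vecMulVec v v + d • 1) =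
      Lam * (d + c * (v ⬝ᵥ v)) + ((p : ℝ) - 1) * (lam * d) := by
  obtain ⟨m, rfl⟩ : ∃ m, n = m + 1 := Nat.exists_eq_add_one.mpr (by omega)
  rw [pucciSupP_of_sortedEig_eq hp hpn lam Lam d _ (sortedEig_smul_vecMulVec_add_smul_one v hc d),
    max_eq_left hT, max_eq_right (neg_nonpos.mpr hT), max_eq_right hd,
    max_eq_left (neg_nonneg.mpr hd)]
  ring

lemma Filter.EventuallyEq.hessianMatrix_eq {n : ℕ} {φ ψ : EuclideanSpace ℝ (Fin n) → ℝ}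
    {x : EuclideanSpace ℝ (Fin n)} (h : φ =ᶠ[𝓝 x] ψ) : hessianMatrix φ x = hessianMatrix ψ x := by
  ext i j
  simp only [hessianMatrix, (h.iteratedFDeriv ℝ 2).eq_of_nhds]

lemma hessianMatrix_comp_norm_sq {n : ℕ} {f f' : ℝ → ℝ} {f'' : ℝ} {x : EuclideanSpace ℝ (Fin n)}
    (hf : ∀ᶠ t in 𝓝 (‖x‖ ^ 2), HasDerivAt f (f' t) t) (hf' : HasDerivAt f' f'' (‖x‖ ^ 2)) :
    hessianMatrix (fun y => f (‖y‖ ^ 2)) x =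
      (4 * f'') • vecMulVec x.ofLp x.ofLp + (2 * f' (‖x‖ ^ 2)) • 1 := by
  have hN (y : EuclideanSpace ℝ (Fin n)) :
      HasFDerivAt (fun z : EuclideanSpace ℝ (Fin n) => ‖z‖ ^ 2) (2 • innerSL ℝ y) y :=
    (hasStrictFDerivAt_norm_sq y).hasFDerivAt
  have hf_near : ∀ᶠ y in 𝓝 x, HasDerivAt f (f' (‖y‖ ^ 2)) (‖y‖ ^ 2) :=
    (continuous_norm.pow 2).continuousAt.eventually hf
  have hDf : fderiv ℝ (fun y => f (‖y‖ ^ 2)) =ᶠ[𝓝 x]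
      fun y => (2 * f' (‖y‖ ^ 2)) • innerSL ℝ y := by
    filter_upwards [hf_near] with y hy
    rw [HasFDerivAt.fderiv (f := fun y => f (‖y‖ ^ 2)) (hy.comp_hasFDerivAt y (hN y))]
    module
  have hD2f := ((hf'.comp_hasFDerivAt x (hN x)).const_mul 2).smul (innerSL ℝ).hasFDerivAt
  ext i j
  simp only [hessianMatrix, iteratedFDeriv_two_apply, hDf.fderiv_eq,
    HasFDerivAt.fderiv (f := fun y => (2 * f' (‖y‖ ^ 2)) • innerSL ℝ y) hD2f]
  simp only [FunLike.coe_add, FunLike.coe_smul, Pi.add_apply,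
    Pi.smul_apply, ContinuousLinearMap.smulRight_apply]
  rw [innerSL_apply_apply, innerSL_apply_apply, innerSL_apply_apply]
  simp only [cons_val_zero, cons_val_one, EuclideanSpace.inner_single_right, PiLp.single_apply,
    Matrix.add_apply, Matrix.smul_apply, vecMulVec_apply, one_apply, eq_comm (a := j), smul_eq_mul,
    conj_trivial, Function.comp_apply]
  split_ifs <;> ring

lemma pucciSupP_hessian_comp_norm_sq {n p : ℕ} (hp : 1 ≤ p) (hpn : p ≤ n) (lam Lam : ℝ)
    {f f' : ℝ → ℝ} {f'' : ℝ} {x : EuclideanSpace ℝ (Fin n)}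
    (hf : ∀ᶠ t in 𝓝 (‖x‖ ^ 2), HasDerivAt f (f' t) t) (hf' : HasDerivAt f' f'' (‖x‖ ^ 2))
    (hf''_nonneg : 0 ≤ f'') (hf'_nonpos : f' (‖x‖ ^ 2) ≤ 0)
    (hradial : 0 ≤ f' (‖x‖ ^ 2) + 2 * f'' * ‖x‖ ^ 2) :
    pucciSupP lam Lam p (hessianMatrix (fun y => f (‖y‖ ^ 2)) x) =
      2 * (Lam * (f' (‖x‖ ^ 2) + 2 * f'' * ‖x‖ ^ 2) + ((p : ℝ) - 1) * (lam * f' (‖x‖ ^ 2))) := by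
  have hx : x.ofLp ⬝ᵥ x.ofLp = ‖x‖ ^ 2 := by
    rw [← real_inner_self_eq_norm_sq, EuclideanSpace.inner_eq_star_dotProduct]
    simp
  rw [hessianMatrix_comp_norm_sq hf hf', pucciSupP_smul_vecMulVec_add_smul_one hp hpn, hx]
  · ring
  · positivity
  · linarith
  · rw [hx]; linarith

lemma pucciSupP_hessian_rpow_neg_norm {n p : ℕ} (hp : 1 ≤ p) (hpn : p ≤ n) (lam Lam : ℝ) {α : ℝ}
    (hα : 0 ≤ α) {x : EuclideanSpace ℝ (Fin n)} (hx : x ≠ 0) :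
    pucciSupP lam Lam p (hessianMatrix (fun y => ‖y‖ ^ (-α)) x) =
      α * (Lam * (α + 1) - lam * ((p : ℝ) - 1)) * ‖x‖ ^ (-α - 2) := by
  have hq : 0 < ‖x‖ ^ 2 := by positivity
  have hpow (y : EuclideanSpace ℝ (Fin n)) (a : ℝ) : ‖y‖ ^ a = (‖y‖ ^ 2) ^ (a / 2) := by
    rw [← Real.rpow_natCast, ← Real.rpow_mul (norm_nonneg y)]
    push_cast
    ring_nf
  have hf' : HasDerivAt (fun t => -α / 2 * t ^ (-α / 2 - 1))
      (-α / 2 * ((-α / 2 - 1) * (‖x‖ ^ 2) ^ (-α / 2 - 1) / ‖x‖ ^ 2)) (‖x‖ ^ 2) := by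
    rw [mul_div_assoc, ← Real.rpow_sub_one hq.ne']
    exact (Real.hasDerivAt_rpow_const (Or.inl hq.ne')).const_mul _
  rw [funext fun y => hpow y (-α), pucciSupP_hessian_comp_norm_sq hp hpn lam Lam
    ((eventually_gt_nhds hq).mono fun t ht => Real.hasDerivAt_rpow_const (Or.inl ht.ne')) hf',
    hpow x]
  · field_simp
    ring
  · have : 0 ≤ α / 2 * (α / 2 + 1) * (‖x‖ ^ 2) ^ (-α / 2 - 1) / ‖x‖ ^ 2 := by positivity
    convert this using 1
    ring
  · have : 0 ≤ α / 2 * (‖x‖ ^ 2) ^ (-α / 2 - 1) := by positivity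
    linarith
  · have : 0 ≤ α * (α + 1) / 2 * (‖x‖ ^ 2) ^ (-α / 2 - 1) := by positivity
    convert this using 1
    field_simp
    ring

lemma pucciSupP_hessian_log_div_norm {n p : ℕ} (hp : 1 ≤ p) (hpn : p ≤ n) (lam Lam : ℝ) {R : ℝ}
    (hR : R ≠ 0) {x : EuclideanSpace ℝ (Fin n)} (hx : x ≠ 0) :
    pucciSupP lam Lam p (hessianMatrix (fun y => Real.log (R / ‖y‖)) x) =
      (Lam - lam * ((p : ℝ) - 1)) / ‖x‖ ^ 2 := by
  have hq : 0 < ‖x‖ ^ 2 := by positivity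
  have hΦ : (fun y => Real.log (R / ‖y‖)) =ᶠ[𝓝 x]
      fun y => Real.log R - Real.log (‖y‖ ^ 2) / 2 := by
    filter_upwards [eventually_ne_nhds hx] with y hy
    rw [Real.log_div hR (norm_ne_zero_iff.mpr hy), Real.log_pow]
    push_cast
    ring
  rw [hΦ.hessianMatrix_eq, pucciSupP_hessian_comp_norm_sq hp hpn lam Lam
    ((eventually_gt_nhds hq).mono fun t ht =>
      ((Real.hasDerivAt_log ht.ne').div_const 2).const_sub (Real.log R))
    ((hasDerivAt_inv hq.ne').div_const 2).neg]
  · field_simp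
    ring
  · have : 0 ≤ ((‖x‖ ^ 2) ^ 2)⁻¹ / 2 := by positivity
    linarith
  · have : 0 ≤ (‖x‖ ^ 2)⁻¹ / 2 := by positivity
    linarith
  · have : 0 ≤ (‖x‖ ^ 2)⁻¹ / 2 := by positivity
    convert this using 1
    field_simp
    ring

theorem pucci_fundamental_solutions_general (n : ℕ) (lam Lam : ℝ) (p : ℕ) (hp2 : 2 ≤ p) (hpn : p ≤ n)
    (αs : ℝ) (hαs : αs = lam / Lam * ((p : ℝ) - 1) - 1) :
    (0 < αs →
      ContDiffOn ℝ 2 (fun x : EuclideanSpace ℝ (Fin n) => ‖x‖ ^ (-αs)) {x : EuclideanSpace ℝ (Fin n) | x ≠ 0} ∧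
      ∀ x : EuclideanSpace ℝ (Fin n), x ≠ 0 →
        pucciSupP lam Lam p (hessianMatrix (fun x : EuclideanSpace ℝ (Fin n) => ‖x‖ ^ (-αs)) x) = 0) ∧
    (αs = 0 → ∀ R : ℝ, 0 < R →
      ContDiffOn ℝ 2 (fun x : EuclideanSpace ℝ (Fin n) => Real.log (R / ‖x‖))
        {x : EuclideanSpace ℝ (Fin n) | x ≠ 0 ∧ ‖x‖ < R} ∧
      (∀ x : EuclideanSpace ℝ (Fin n), x ≠ 0 → ‖x‖ < R → 0 < Real.log (R / ‖x‖)) ∧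
      ∀ x : EuclideanSpace ℝ (Fin n), x ≠ 0 → ‖x‖ < R →
        pucciSupP lam Lam p
          (hessianMatrix (fun x : EuclideanSpace ℝ (Fin n) => Real.log (R / ‖x‖)) x) = 0) := by
  have hp : 1 ≤ p := by omega
  have hcritical (hα : 0 ≤ αs) : Lam * (αs + 1) = lam * ((p : ℝ) - 1) := by
    have hLam : Lam ≠ 0 := by
      rintro rfl
      rw [div_zero, zero_mul, zero_sub] at hαs
      linarith
    rw [hαs]
    field_simp
    ring
  refine ⟨fun hα => ⟨fun x hx => ?_, fun x hx => ?_⟩,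
    fun hα R hR => ⟨fun x hx => ?_, fun x hx hxR => ?_, fun x hx hxR => ?_⟩⟩
  · exact ((Real.contDiffAt_rpow_const_of_ne (norm_ne_zero_iff.mpr hx)).comp x
      (contDiffAt_norm ℝ hx)).contDiffWithinAt
  · rw [pucciSupP_hessian_rpow_neg_norm hp hpn lam Lam hα.le hx, hcritical hα.le, sub_self,
      mul_zero, zero_mul]
  · have hx0 : ‖x‖ ≠ 0 := norm_ne_zero_iff.mpr hx.1
    exact ((Real.contDiffAt_log.mpr (div_ne_zero hR.ne' hx0)).comp x
      (contDiffAt_const.div (contDiffAt_norm ℝ hx.1) hx0)).contDiffWithinAt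
  · exact Real.log_pos ((one_lt_div (norm_pos_iff.mpr hx)).mpr hxR)
  · rw [pucciSupP_hessian_log_div_norm hp hpn lam Lam hR.ne' hx, ← hcritical hα.ge, hα,
      zero_add, mul_one, sub_self, zero_div]

/-- fundamental solutions of the degenerate Pucci maximal equation. -/
theorem pucci_fundamental_solutions (n : ℕ) (lam Lam : ℝ) (hlam : 0 < lam)
    (hLam : lam ≤ Lam) (p : ℕ) (hp2 : 2 ≤ p) (hpn : p ≤ n)
    (αs : ℝ) (hαs : αs = lam / Lam * ((p : ℝ) - 1) - 1) :
    (0 < αs →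
      ContDiffOn ℝ 2 (fun x : EuclideanSpace ℝ (Fin n) => ‖x‖ ^ (-αs)) {x : EuclideanSpace ℝ (Fin n) | x ≠ 0} ∧
      ∀ x : EuclideanSpace ℝ (Fin n), x ≠ 0 →
        pucciSupP lam Lam p (hessianMatrix (fun x : EuclideanSpace ℝ (Fin n) => ‖x‖ ^ (-αs)) x) = 0) ∧
    (αs = 0 → ∀ R : ℝ, 0 < R →
      ContDiffOn ℝ 2 (fun x : EuclideanSpace ℝ (Fin n) => Real.log (R / ‖x‖))
        {x : EuclideanSpace ℝ (Fin n) | x ≠ 0 ∧ ‖x‖ < R} ∧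
      (∀ x : EuclideanSpace ℝ (Fin n), x ≠ 0 → ‖x‖ < R → 0 < Real.log (R / ‖x‖)) ∧
      ∀ x : EuclideanSpace ℝ (Fin n), x ≠ 0 → ‖x‖ < R →
        pucciSupP lam Lam p
          (hessianMatrix (fun x : EuclideanSpace ℝ (Fin n) => Real.log (R / ‖x‖)) x) = 0) :=
  pucci_fundamental_solutions_general n lam Lam p hp2 hpn αs hαs

end
end
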